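/- arXiv:math/0111298 — 2 statements merged into one kernel-verified Lean document; each statement's English description precedes it below -/
import Mathlib

section
/- For any integer p > 1, (1/p) · Σ' 1/|ζ−1|² = p/12 − 1/(12p), where the primed sum runs over all p-th roots of unity ζ ≠ 1 in ℂ. -/
/-- The set of `p`-th roots of unity in `ℂ` different from `1`. -/
noncomputable def nontrivialRootsOfUnity (p : ℕ) : Finset ℂ :=
  (Polynomial.nthRoots p (1 : ℂ)).toFinset.erase 1

/-!
For a `p`-th root of unity `ζ ≠ 1` one has `(ζ - 1) * ∑_{j<p} j ζ^j = p`, so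
`1 / |ζ - 1|² = |∑_{j<p} j ζ^j|² / p²`. By Parseval's identity for the discrete Fourier
transform, the sum of `|∑_{j<p} j ζ^j|²` over all `p`-th roots of unity is `p ∑_{j<p} j²`;
removing the term `ζ = 1`, which is `(∑_{j<p} j)²`, leaves `p²(p² - 1)/12`.
-/

open Finset Complex Polynomial ComplexConjugate

section CommRing

variable {R : Type*} [CommRing R]

theorem sum_range_natCast_mul_two (n : ℕ) : (∑ i ∈ range n, (i : R)) * 2 = n * (n - 1) := by
  induction n with
  | zero => simp
  | succ n ih => rw [sum_range_succ]; push_cast; linear_combination ih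

theorem sum_range_natCast_sq_mul_six (n : ℕ) :
    (∑ i ∈ range n, (i : R) ^ 2) * 6 = n * (n - 1) * (2 * n - 1) := by
  induction n with
  | zero => simp
  | succ n ih => rw [sum_range_succ]; push_cast; linear_combination ih

theorem sub_one_mul_sum_range_natCast_mul_pow (x : R) (n : ℕ) :
    (x - 1) * ∑ j ∈ range n, (j : R) * x ^ j = n * x ^ n - x * ∑ j ∈ range n, x ^ j := by
  induction n with
  | zero => simp
  | succ n ih => simp only [sum_range_succ]; push_cast; linear_combination ih

end CommRing

section Field

variable {K : Type*} [Field K] {p : ℕ}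

theorem sub_one_mul_sum_range_natCast_mul_pow_of_pow_eq_one {ζ : K} (hζp : ζ ^ p = 1)
    (hζ : ζ ≠ 1) : (ζ - 1) * ∑ j ∈ range p, (j : K) * ζ ^ j = p := by
  have hgeom : ∑ j ∈ range p, ζ ^ j = 0 := by
    simpa [hζp, sub_eq_zero, hζ] using geom_sum_mul ζ p
  rw [sub_one_mul_sum_range_natCast_mul_pow, hζp, hgeom]
  ring

theorem IsPrimitiveRoot.sum_nthRootsFinset_zpow {ζ₀ : K} (hζ₀ : IsPrimitiveRoot ζ₀ p) (m : ℤ) :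
    ∑ ζ ∈ nthRootsFinset p (1 : K), ζ ^ m = if (p : ℤ) ∣ m then (p : K) else 0 := by
  rcases p.eq_zero_or_pos with rfl | hp
  · simp
  have hmem {ζ : K} : ζ ∈ nthRootsFinset p (1 : K) ↔ ζ ^ p = 1 := Polynomial.mem_nthRootsFinset hp 1
  split_ifs with hm
  · obtain ⟨c, rfl⟩ := hm
    have hroot : ∀ ζ ∈ nthRootsFinset p (1 : K), ζ ^ ((p : ℤ) * c) = 1 := by
      intro ζ hζ
      rw [zpow_mul, zpow_natCast, hmem.1 hζ, one_zpow]
    rw [sum_congr rfl hroot, sum_const, hζ₀.card_nthRootsFinset, nsmul_one]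
  · -- multiplication by `ζ₀` permutes the `p`-th roots of unity
    have hrot : ζ₀ ^ m * ∑ ζ ∈ nthRootsFinset p (1 : K), ζ ^ m =
        ∑ ζ ∈ nthRootsFinset p (1 : K), ζ ^ m := by
      have hζ₀0 : ζ₀ ≠ 0 := hζ₀.ne_zero hp.ne'
      rw [mul_sum]
      refine sum_nbij' (ζ₀ * ·) (ζ₀⁻¹ * ·) ?_ ?_ ?_ ?_ ?_ <;> intro ζ hζ
      · rw [hmem, mul_pow, hζ₀.pow_eq_one, hmem.1 hζ, one_mul]
      · rw [hmem, mul_pow, inv_pow, hζ₀.pow_eq_one, hmem.1 hζ, inv_one, one_mul]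
      · exact inv_mul_cancel_left₀ hζ₀0 ζ
      · exact mul_inv_cancel_left₀ hζ₀0 ζ
      · exact (mul_zpow ζ₀ ζ m).symm
    have hne : ζ₀ ^ m - 1 ≠ 0 := sub_ne_zero.2 fun h => hm ((hζ₀.zpow_eq_one_iff_dvd m).1 h)
    exact (mul_eq_zero.1 (by linear_combination hrot : (ζ₀ ^ m - 1) * _ = 0)).resolve_left hne

theorem IsPrimitiveRoot.sum_nthRootsFinset_pow_mul_inv_pow {ζ₀ : K} (hζ₀ : IsPrimitiveRoot ζ₀ p)
    {j k : ℕ} (hj : j < p) (hk : k < p) :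
    ∑ ζ ∈ nthRootsFinset p (1 : K), ζ ^ j * (ζ ^ k)⁻¹ = if j = k then (p : K) else 0 := by
  have hzpow : ∀ ζ ∈ nthRootsFinset p (1 : K), ζ ^ j * (ζ ^ k)⁻¹ = ζ ^ ((j : ℤ) - k) :=
    fun ζ hζ => by
      rw [zpow_sub₀ (ne_zero_of_mem_nthRootsFinset one_ne_zero hζ), zpow_natCast, zpow_natCast,
        div_eq_mul_inv]
  have hdvd : (p : ℤ) ∣ (j : ℤ) - k ↔ j = k := by
    rw [← Nat.modEq_iff_dvd]
    exact ⟨fun h => (h.eq_of_lt_of_lt hk hj).symm, fun h => h ▸ rfl⟩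
  rw [sum_congr rfl hzpow, hζ₀.sum_nthRootsFinset_zpow, if_congr hdvd rfl rfl]

end Field

section Complex

variable {p : ℕ}

theorem sum_nthRootsFinset_normSq_sum_mul_pow (hp : p ≠ 0) (a : ℕ → ℂ) :
    ∑ ζ ∈ nthRootsFinset p (1 : ℂ), normSq (∑ j ∈ range p, a j * ζ ^ j) =
      p * ∑ j ∈ range p, normSq (a j) := by
  have hζ₀ := Complex.isPrimitiveRoot_exp p hp
  have hconj : ∀ ζ ∈ nthRootsFinset p (1 : ℂ), conj ζ = ζ⁻¹ := fun ζ hζ =>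
    (RCLike.inv_eq_conj (norm_eq_one_of_pow_eq_one
      ((mem_nthRootsFinset (Nat.pos_of_ne_zero hp) 1).1 hζ) hp)).symm
  apply ofReal_injective
  push_cast
  simp_rw [← mul_conj, map_sum, map_mul, map_pow]
  calc ∑ ζ ∈ nthRootsFinset p (1 : ℂ),
          (∑ j ∈ range p, a j * ζ ^ j) * ∑ k ∈ range p, conj (a k) * conj ζ ^ k
      = ∑ ζ ∈ nthRootsFinset p (1 : ℂ), ∑ j ∈ range p, ∑ k ∈ range p,
          a j * conj (a k) * (ζ ^ j * (ζ ^ k)⁻¹) := by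
        refine sum_congr rfl fun ζ hζ => ?_
        rw [hconj ζ hζ, sum_mul_sum]
        exact sum_congr rfl fun j _ => sum_congr rfl fun k _ => by rw [inv_pow]; ring
    _ = ∑ j ∈ range p, ∑ k ∈ range p,
          a j * conj (a k) * ∑ ζ ∈ nthRootsFinset p (1 : ℂ), ζ ^ j * (ζ ^ k)⁻¹ := by
        rw [sum_comm]
        refine sum_congr rfl fun j _ => ?_
        rw [sum_comm]
        simp only [mul_sum]
    _ = ∑ j ∈ range p, ∑ k ∈ range p, a j * conj (a k) * if j = k then (p : ℂ) else 0 :=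
        sum_congr rfl fun j hj => sum_congr rfl fun k hk => by
          rw [hζ₀.sum_nthRootsFinset_pow_mul_inv_pow (mem_range.1 hj) (mem_range.1 hk)]
    _ = p * ∑ j ∈ range p, a j * conj (a j) := by
        simp only [mul_ite, mul_zero, sum_ite_eq, mul_sum]
        exact sum_congr rfl fun j hj => by rw [if_pos hj]; ring

theorem sum_nontrivialRootsOfUnity_normSq_sum_mul_pow (hp : p ≠ 0) (a : ℕ → ℂ) :
    ∑ ζ ∈ nontrivialRootsOfUnity p, normSq (∑ j ∈ range p, a j * ζ ^ j) =
      p * ∑ j ∈ range p, normSq (a j) - normSq (∑ j ∈ range p, a j) := by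
  rw [nontrivialRootsOfUnity, ← nthRootsFinset_def,
    sum_erase_eq_sub (one_mem_nthRootsFinset (Nat.pos_of_ne_zero hp)),
    sum_nthRootsFinset_normSq_sum_mul_pow hp]
  simp only [one_pow, mul_one]

theorem one_div_normSq_sub_one_of_pow_eq_one (hp : p ≠ 0) {ζ : ℂ} (hζp : ζ ^ p = 1)
    (hζ : ζ ≠ 1) : 1 / normSq (ζ - 1) = normSq (∑ j ∈ range p, (j : ℂ) * ζ ^ j) / p ^ 2 := by
  have hprod := congrArg normSq (sub_one_mul_sum_range_natCast_mul_pow_of_pow_eq_one hζp hζ)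
  rw [map_mul, normSq_natCast] at hprod
  have hne : normSq (ζ - 1) ≠ 0 := normSq_eq_zero.not.2 (sub_ne_zero.2 hζ)
  rw [one_div, eq_div_iff (by positivity), sq, ← hprod, inv_mul_cancel_left₀ hne]

end Complex

theorem sum_inv_normSq_roots (p : ℕ) (hp : 1 < p) :
    (1 / (p : ℝ)) * ∑ ζ ∈ nontrivialRootsOfUnity p, 1 / Complex.normSq (ζ - 1) =
      (p : ℝ) / 12 - 1 / (12 * (p : ℝ)) := by
  have hp0 : p ≠ 0 := by omega
  have hterm : ∀ ζ ∈ nontrivialRootsOfUnity p,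
      1 / normSq (ζ - 1) = normSq (∑ j ∈ range p, (j : ℂ) * ζ ^ j) / p ^ 2 := by
    intro ζ hζ
    obtain ⟨hζ1, hζp⟩ : ζ ≠ 1 ∧ ζ ^ p = 1 := by
      simpa [nontrivialRootsOfUnity, mem_nthRoots (Nat.pos_of_ne_zero hp0)] using hζ
    exact one_div_normSq_sub_one_of_pow_eq_one hp0 hζp hζ1
  have hsum : ∑ ζ ∈ nontrivialRootsOfUnity p, normSq (∑ j ∈ range p, (j : ℂ) * ζ ^ j) =
      p * ∑ j ∈ range p, (j : ℝ) ^ 2 - (∑ j ∈ range p, (j : ℝ)) ^ 2 := by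
    rw [sum_nontrivialRootsOfUnity_normSq_sum_mul_pow hp0, ← Nat.cast_sum, normSq_natCast]
    simp only [normSq_natCast, ← sq, Nat.cast_sum]
  have hB : ∑ j ∈ range p, (j : ℝ) = p * (p - 1) / 2 :=
    eq_div_of_mul_eq two_ne_zero (sum_range_natCast_mul_two p)
  have hA : ∑ j ∈ range p, (j : ℝ) ^ 2 = p * (p - 1) * (2 * p - 1) / 6 :=
    eq_div_of_mul_eq (by norm_num) (sum_range_natCast_sq_mul_six p)
  rw [sum_congr rfl hterm, ← sum_div, hsum, hA, hB]
  field_simp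
  ring
end

section
/- For coprime integers h, k with k ≥ 1 and real numbers x, y not both integers (meaning at least one of x, y is not an integer — more precisely the stated hypothesis: x and/or y is not an integer), the Dedekind–Rademacher sums satisfy the reciprocity law s(h,k;x,y) + s(k,h;y,x) = ((x))·((y)) + (h²ψ₂(y) + ψ₂(hy + kx) + k²ψ₂(x))/(2hk), where ψ₂(x) = B₂({x}) and B₂(t) = t² − t + 1/6. -/
open scoped Classical

/-- The Dedekind symbol `((x))`. -/
noncomputable def dedekindSymbol (x : ℝ) : ℝ :=
  if ∃ n : ℤ, x = (n : ℝ) then 0 else Int.fract x - 1/2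

/-- The Dedekind–Rademacher sum `s(h,k;x,y)`. -/
noncomputable def dedekindRademacherSum (h k : ℕ) (x y : ℝ) : ℝ :=
  ∑ μ ∈ Finset.range k,
    dedekindSymbol (((μ : ℝ) + y) / (k : ℝ)) *
      dedekindSymbol ((h : ℝ) * ((μ : ℝ) + y) / (k : ℝ) + x)

/-- The second Bernoulli polynomial. -/
noncomputable def B₂ (t : ℝ) : ℝ := t ^ 2 - t + 1/6

/-- `ψ₂(x) = B₂({x})`. -/
noncomputable def ψ₂ (x : ℝ) : ℝ := B₂ (Int.fract x)

/-!
Raabe's multiplication formulas `∑_{μ<k} ((μ + t)/k)) = ((t))` and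
`∑_{μ<k} ψ₂((μ + t)/k) = ψ₂(t)/k` rewrite `s(h,k;x,y)` and `s(k,h;y,x)` as double sums over
`μ < k`, `ν < h` of `((a))((a + b))` and `((b))((a + b))`, where `a = (μ + y)/k` and
`b = (ν + x)/h`. Adding them, the pointwise identity
`(((a)) + ((b)))((a + b)) = ((a))((b)) + (ψ₂ a + ψ₂ b + ψ₂ (a + b))/2`, valid unless `a` and `b`
are both integers, leaves sums that the multiplication formulas evaluate; for `ψ₂ (a + b)` one
also uses that `μ ↦ hμ` permutes the residues modulo `k` when `h` and `k` are coprime.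
-/

open Finset Function

theorem Function.Periodic.map_fract {α : Type*} {F : ℝ → α} (hF : Periodic F 1) (t : ℝ) :
    F (Int.fract t) = F t := by
  simpa using hF.sub_int_mul_eq (x := t) ⌊t⌋

theorem Function.Periodic.sum_range_add_div {M : Type*} [AddCancelCommMonoid M] {F : ℝ → M}
    (hF : Periodic F 1) (k : ℕ) : Periodic (fun t => ∑ μ ∈ range k, F ((μ + t) / k)) 1 := by
  intro t
  have hlast : F ((k + t) / k) = F ((0 + t) / k) := by
    rcases k.eq_zero_or_pos with rfl | hk
    · simp
    · rw [add_div, div_self (by positivity), add_comm, hF, zero_add]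
  have hshift := sum_range_succ' (fun μ : ℕ => F ((μ + t) / k)) k
  rw [sum_range_succ, hlast, Nat.cast_zero, add_left_inj] at hshift
  simpa only [Nat.cast_succ, add_assoc, add_comm 1 t] using hshift.symm

theorem Int.fract_add_div_of_lt {s : ℝ} (hs₀ : 0 ≤ s) (hs₁ : s < 1) {k μ : ℕ} (hμ : μ < k) :
    Int.fract ((μ + s) / k) = (μ + s) / k := by
  have hμk : (μ : ℝ) + 1 ≤ k := by exact_mod_cast hμ
  rw [Int.fract_eq_self]
  exact ⟨by positivity, (div_lt_one (by linarith)).mpr (by linarith)⟩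

theorem Int.fract_add_eq_or (a b : ℝ) :
    Int.fract (a + b) = Int.fract a + Int.fract b ∨
      Int.fract (a + b) = Int.fract a + Int.fract b - 1 := by
  obtain ⟨z, hz⟩ := Int.fract_add a b
  have hlo : -2 < (z : ℝ) := by
    linarith [Int.fract_nonneg (a + b), Int.fract_lt_one a, Int.fract_lt_one b]
  have hhi : (z : ℝ) < 1 := by
    linarith [Int.fract_lt_one (a + b), Int.fract_nonneg a, Int.fract_nonneg b]
  obtain rfl | rfl : z = 0 ∨ z = -1 := by
    have : (-2 : ℤ) < z := by exact_mod_cast hlo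
    have : z < 1 := by exact_mod_cast hhi
    omega
  · left; push_cast at hz; linarith
  · right; push_cast at hz; linarith

theorem sum_range_cast_id {K : Type*} [Field K] [CharZero K] (n : ℕ) :
    ∑ i ∈ range n, (i : K) = n * (n - 1) / 2 := by
  induction n with
  | zero => simp
  | succ n ih => rw [sum_range_succ, ih]; push_cast; ring

theorem sum_range_cast_sq {K : Type*} [Field K] [CharZero K] (n : ℕ) :
    ∑ i ∈ range n, (i : K) ^ 2 = n * (n - 1) * (2 * n - 1) / 6 := by
  induction n with
  | zero => simp
  | succ n ih => rw [sum_range_succ, ih]; push_cast; ring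

theorem sum_range_fract_add_div {k : ℕ} (hk : 0 < k) (t : ℝ) :
    ∑ μ ∈ range k, Int.fract ((μ + t) / k) = Int.fract t + (k - 1) / 2 := by
  rw [← ((Int.fract_periodic ℝ).sum_range_add_div k).map_fract t,
    sum_congr rfl fun μ hμ => Int.fract_add_div_of_lt (Int.fract_nonneg t) (Int.fract_lt_one t)
      (mem_range.mp hμ), ← sum_div, sum_add_distrib, sum_range_cast_id, sum_const,
    card_range, nsmul_eq_mul]
  field_simp
  ring

theorem sum_range_B₂_add_div (k : ℕ) (s : ℝ) : ∑ μ ∈ range k, B₂ ((μ + s) / k) = B₂ s / k := by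
  rcases k.eq_zero_or_pos with rfl | hk
  · simp
  have hexpand : ∀ μ : ℕ, B₂ ((μ + s) / k) =
      (μ : ℝ) ^ 2 / k ^ 2 + μ * ((2 * s - k) / k ^ 2) + (s ^ 2 / k ^ 2 - s / k + 1 / 6) := by
    intro μ
    simp only [B₂]
    field_simp
    ring
  rw [sum_congr rfl fun μ _ => hexpand μ]
  simp only [sum_add_distrib, ← sum_div, ← sum_mul, sum_range_cast_id,
    sum_range_cast_sq, sum_const, card_range, nsmul_eq_mul, B₂]
  field_simp
  ring

theorem periodic_ψ₂ : Periodic ψ₂ 1 := (Int.fract_periodic ℝ).comp B₂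

theorem sum_range_ψ₂_add_div (k : ℕ) (t : ℝ) : ∑ μ ∈ range k, ψ₂ ((μ + t) / k) = ψ₂ t / k := by
  rcases k.eq_zero_or_pos with rfl | hk
  · simp
  rw [← (periodic_ψ₂.sum_range_add_div k).map_fract t]
  simp only [ψ₂]
  rw [← sum_range_B₂_add_div k]
  exact sum_congr rfl fun μ hμ => congrArg B₂ <|
    Int.fract_add_div_of_lt (Int.fract_nonneg t) (Int.fract_lt_one t) (mem_range.mp hμ)

theorem dedekindSymbol_eq_ite (x : ℝ) :
    dedekindSymbol x = if Int.fract x = 0 then 0 else Int.fract x - 1 / 2 := by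
  simp only [dedekindSymbol, Int.fract_eq_zero_iff, Set.mem_range, eq_comm]

theorem dedekindSymbol_eq_fract_sub_fract_neg (x : ℝ) :
    dedekindSymbol x = (Int.fract x - Int.fract (-x)) / 2 := by
  rw [dedekindSymbol_eq_ite]
  split_ifs with hx
  · rw [hx, Int.fract_neg_eq_zero.mpr hx]; ring
  · rw [Int.fract_neg hx]; ring

theorem sum_range_dedekindSymbol_add_div {k : ℕ} (hk : 0 < k) (t : ℝ) :
    ∑ μ ∈ range k, dedekindSymbol ((μ + t) / k) = dedekindSymbol t := by
  have hreflect : ∑ μ ∈ range k, Int.fract (-((μ + t) / k)) = Int.fract (-t) + (k - 1) / 2 := by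
    rw [← sum_range_reflect, ← Int.fract_one_add, ← sum_range_fract_add_div hk]
    refine sum_congr rfl fun μ hμ => ?_
    rw [← Int.fract_sub_one ((μ + (1 + -t)) / k), Nat.sub_sub,
      Nat.cast_sub (by have := mem_range.mp hμ; omega)]
    congr 1
    field_simp
    push_cast
    ring
  simp only [dedekindSymbol_eq_fract_sub_fract_neg, ← sum_div, sum_sub_distrib,
    sum_range_fract_add_div hk, hreflect]
  ring

/-- Off the integers `ψ₂ = ((·))² - 1/12` and `((a + b)) = ((a)) + ((b)) ± 1/2`, so the identity
amounts to `(((a)) + ((b)) - ((a + b)))² = 1/4`. -/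
theorem dedekindSymbol_add_mul_dedekindSymbol_add (a b : ℝ)
    (hab : Int.fract a ≠ 0 ∨ Int.fract b ≠ 0) :
    (dedekindSymbol a + dedekindSymbol b) * dedekindSymbol (a + b) =
      dedekindSymbol a * dedekindSymbol b + (ψ₂ a + ψ₂ b + ψ₂ (a + b)) / 2 := by
  have hp := Int.fract_nonneg a
  have hq := Int.fract_nonneg b
  have hp' := Int.fract_lt_one a
  have hq' := Int.fract_lt_one b
  have hr := Int.fract_nonneg (a + b)
  have hr' := Int.fract_lt_one (a + b)
  have hsum := Int.fract_add_eq_or a b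
  simp only [dedekindSymbol_eq_ite, ψ₂, B₂]
  generalize Int.fract a = p, Int.fract b = q, Int.fract (a + b) = r at *
  rcases hsum with rfl | rfl <;> split_ifs <;> grind

theorem sum_range_mul_mod {M : Type*} [AddCommMonoid M] {h k : ℕ} (hcop : h.Coprime k)
    (g : ℕ → M) : ∑ μ ∈ range k, g (h * μ % k) = ∑ μ ∈ range k, g μ := by
  have hmaps : Set.MapsTo (fun μ => h * μ % k) (range k) (range k) := fun μ hμ =>
    mem_range.mpr (Nat.mod_lt _ ((Nat.zero_le μ).trans_lt (mem_range.mp hμ)))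
  have hinj : Set.InjOn (fun μ => h * μ % k) (range k) := fun μ hμ ν hν hμν =>
    Nat.ModEq.eq_of_lt_of_lt (Nat.ModEq.cancel_left_of_coprime hcop.symm hμν)
      (mem_range.mp hμ) (mem_range.mp hν)
  exact sum_nbij _ hmaps hinj (surjOn_of_injOn_of_card_le _ hmaps hinj le_rfl) fun _ _ => rfl

theorem Function.Periodic.sum_range_mul_add_div {M : Type*} [AddCommMonoid M] {F : ℝ → M}
    (hF : Periodic F 1) {h k : ℕ} (hcop : h.Coprime k) (z : ℝ) :
    ∑ μ ∈ range k, F ((h * μ + z) / k) = ∑ μ ∈ range k, F ((μ + z) / k) := by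
  rw [← sum_range_mul_mod hcop fun μ => F ((μ + z) / k)]
  refine sum_congr rfl fun μ hμ => ?_
  have hk : (k : ℝ) ≠ 0 := Nat.cast_ne_zero.mpr (by have := mem_range.mp hμ; omega)
  have hdiv : (h * μ : ℝ) = (h * μ % k : ℕ) + k * (h * μ / k : ℕ) := by
    exact_mod_cast (Nat.mod_add_div (h * μ) k).symm
  conv_rhs => rw [← hF.nat_mul (h * μ / k)]
  congr 1
  rw [hdiv]
  field_simp
  ring

theorem sum_range_sum_range_ψ₂_add {h k : ℕ} (hcop : h.Coprime k) (x y : ℝ) :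
    ∑ μ ∈ range k, ∑ ν ∈ range h, ψ₂ ((μ + y) / k + (ν + x) / h) =
      ψ₂ (h * y + k * x) / (h * k) := by
  rcases h.eq_zero_or_pos with rfl | hh
  · simp
  rcases k.eq_zero_or_pos with rfl | hk
  · simp
  have hinner : ∀ μ : ℕ, ∑ ν ∈ range h, ψ₂ ((μ + y) / k + (ν + x) / h) =
      ψ₂ ((h * μ + (h * y + k * x)) / k) / h := by
    intro μ
    rw [← sum_range_ψ₂_add_div h]
    refine sum_congr rfl fun ν _ => congrArg ψ₂ ?_
    field_simp
    ring
  simp only [hinner, ← sum_div, periodic_ψ₂.sum_range_mul_add_div hcop, sum_range_ψ₂_add_div]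
  field_simp

theorem Int.fract_add_div_ne_zero {x : ℝ} (hx : ¬ ∃ m : ℤ, x = m) (ν : ℕ) {h : ℕ} (hh : 0 < h) :
    Int.fract ((ν + x) / h) ≠ 0 := by
  rw [Int.fract_ne_zero_iff]
  rintro ⟨n, hn⟩
  refine hx ⟨n * h - ν, ?_⟩
  rw [eq_div_iff (by positivity)] at hn
  push_cast
  linarith

theorem dedekindRademacherSum_eq_sum_sum {h : ℕ} (hh : 0 < h) (k : ℕ) (x y : ℝ) :
    dedekindRademacherSum h k x y = ∑ μ ∈ range k, ∑ ν ∈ range h,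
      dedekindSymbol ((μ + y) / k) * dedekindSymbol ((μ + y) / k + (ν + x) / h) := by
  refine sum_congr rfl fun μ _ => ?_
  rw [← sum_range_dedekindSymbol_add_div hh (h * (μ + y) / k + x), mul_sum]
  refine sum_congr rfl fun ν _ => congrArg (dedekindSymbol ((μ + y) / k) * dedekindSymbol ·) ?_
  field_simp
  ring

theorem dedekind_rademacher_reciprocity (h k : ℕ) (hh : 0 < h) (hk : 0 < k)
    (hcop : Nat.Coprime h k) (x y : ℝ)
    (hxy : (¬ ∃ m : ℤ, x = (m : ℝ)) ∨ (¬ ∃ m : ℤ, y = (m : ℝ))) :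
    dedekindRademacherSum h k x y + dedekindRademacherSum k h y x =
      dedekindSymbol x * dedekindSymbol y +
        ((h : ℝ) ^ 2 * ψ₂ y + ψ₂ ((h : ℝ) * y + (k : ℝ) * x) + (k : ℝ) ^ 2 * ψ₂ x) /
          (2 * (h : ℝ) * (k : ℝ)) := by
  set a : ℕ → ℝ := fun μ => (μ + y) / k
  set b : ℕ → ℝ := fun ν => (ν + x) / h
  have hab : ∀ μ ν, Int.fract (a μ) ≠ 0 ∨ Int.fract (b ν) ≠ 0 := fun μ ν =>
    hxy.symm.imp (Int.fract_add_div_ne_zero · μ hk) (Int.fract_add_div_ne_zero · ν hh)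
  calc dedekindRademacherSum h k x y + dedekindRademacherSum k h y x
      = ∑ μ ∈ range k, ∑ ν ∈ range h,
          (dedekindSymbol (a μ) + dedekindSymbol (b ν)) * dedekindSymbol (a μ + b ν) := by
        simp only [dedekindRademacherSum_eq_sum_sum hh, dedekindRademacherSum_eq_sum_sum hk,
          sum_comm (s := range h), ← sum_add_distrib, add_mul, add_comm (b _) (a _), a, b]
    _ = ∑ μ ∈ range k, ∑ ν ∈ range h, (dedekindSymbol (a μ) * dedekindSymbol (b ν) +
          (ψ₂ (a μ) + ψ₂ (b ν) + ψ₂ (a μ + b ν)) / 2) := by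
        simp only [dedekindSymbol_add_mul_dedekindSymbol_add _ _ (hab _ _)]
    _ = dedekindSymbol y * dedekindSymbol x +
          (h * (ψ₂ y / k) + k * ψ₂ x / h + ψ₂ (h * y + k * x) / (h * k)) / 2 := by
        simp only [sum_add_distrib, ← sum_div, ← mul_sum, ← sum_mul, sum_const, card_range,
          nsmul_eq_mul, sum_range_dedekindSymbol_add_div hh, sum_range_dedekindSymbol_add_div hk,
          sum_range_ψ₂_add_div, sum_range_sum_range_ψ₂_add hcop, a, b]
    _ = _ := by
        field_simp
        ring
end
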